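/- Let n ≥ 1 be a natural number with n ≠ 2, and let 1 < p < q < p*(n). Then ω_{p,q} < ω_{σ,τ,p,q}. -/

import Mathlib

/-- `σ = n/(p+1) - (n-2)/2`. -/
noncomputable def sigma (n : ℕ) (p : ℝ) : ℝ := n / (p + 1) - ((n : ℝ) - 2) / 2

/-- `τ = n/(q+1) - (n-2)/2`. -/
noncomputable def tau (n : ℕ) (q : ℝ) : ℝ := n / (q + 1) - ((n : ℝ) - 2) / 2

/-- The critical frequency `ω_{p,q}`. -/
noncomputable def omegaPQ (p q : ℝ) : ℝ :=
  (2 * (q - p) / ((p + 1) * (q - 1))) *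
    (((p - 1) * (q + 1)) / ((p + 1) * (q - 1))) ^ ((p - 1) / (q - p))

/-- The critical frequency `ω_{σ,τ,p,q}`. -/
noncomputable def omegaSig (n : ℕ) (p q : ℝ) : ℝ :=
  sigma n p * ((q - p) / (q - 1)) *
    ((sigma n p * (p - 1)) / (tau n q * (q - 1))) ^ ((p - 1) / (q - p))

/-!
Write `a = (p-1)/(q-p)`, `x = (p+1)σ` and `y = (q+1)τ`. Then
`ω_{σ,τ,p,q} = ω_{p,q} · (x/2) · (x/y)^a`, and since `x = (n+2-(n-2)p)/2` and
`y = (n+2-(n-2)q)/2` are affine in the exponent, `x + a(x - y) = 2`: the point `x` is a convex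
combination of `2` and `y`. Concavity of `log` (weighted AM-GM) then gives
`x^(1+a) > 2 y^a`, strictly because `x ≠ 2` when `n ≠ 2`.
-/

open Real

/-- Weighted AM-GM: if `c = x + a (x - y)` then `c y^a < x^(1+a)`. -/
theorem one_lt_div_mul_div_rpow {x y c a : ℝ} (hx : 0 < x) (hy : 0 < y) (hc : 0 < c)
    (ha : 0 ≤ a) (hxc : x ≠ c) (h : x + a * (x - y) = c) :
    1 < x / c * (x / y) ^ a := by
  have hc_log : log c - log x < (c - x) / x := by
    have := log_lt_sub_one_of_pos (div_pos hc hx) (by rwa [ne_eq, div_eq_one_iff_eq hx.ne', eq_comm])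
    rwa [log_div hc.ne' hx.ne', div_sub_one hx.ne'] at this
  have hy_log : log y - log x ≤ (y - x) / x := by
    have := log_le_sub_one_of_pos (div_pos hy hx)
    rwa [log_div hy.ne' hx.ne', div_sub_one hx.ne'] at this
  have hsum : (c - x) / x + a * ((y - x) / x) = 0 := by
    rw [← h]; field_simp; ring
  have hlog : log (x / c * (x / y) ^ a) = -((log c - log x) + a * (log y - log x)) := by
    rw [log_mul (div_pos hx hc).ne' (rpow_pos_of_pos (div_pos hx hy) a).ne',
      log_rpow (div_pos hx hy), log_div hx.ne' hc.ne', log_div hx.ne' hy.ne']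
    ring
  rw [← log_pos_iff (by positivity), hlog]
  nlinarith [mul_le_mul_of_nonneg_left hy_log ha]

theorem tau_eq_sigma : tau = sigma := rfl

theorem add_one_mul_sigma (n : ℕ) {p : ℝ} (hp : p + 1 ≠ 0) :
    (p + 1) * sigma n p = ((n : ℝ) + 2 - ((n : ℝ) - 2) * p) / 2 := by
  unfold sigma
  field_simp
  ring

theorem sigma_pos {n : ℕ} {p : ℝ} (hp : -1 < p)
    (hsub : 3 ≤ n → p < ((n : ℝ) + 2) / ((n : ℝ) - 2)) : 0 < sigma n p := by
  have hp1 : 0 < p + 1 := by linarith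
  suffices 0 < (p + 1) * sigma n p from pos_of_mul_pos_right this hp1.le
  rw [add_one_mul_sigma n hp1.ne']
  rcases le_or_gt n 2 with hn | hn
  · have : (n : ℝ) ≤ 2 := by exact_mod_cast hn
    nlinarith [mul_nonneg (sub_nonneg.mpr this) hp1.le, Nat.cast_nonneg (α := ℝ) n]
  · have hn3 : (3 : ℝ) ≤ n := by exact_mod_cast hn
    have := hsub hn
    rw [lt_div_iff₀ (by linarith)] at this
    linarith

theorem omegaPQ_pos {p q : ℝ} (hp : 1 < p) (hpq : p < q) : 0 < omegaPQ p q := by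
  unfold omegaPQ
  have : 0 < (p - 1) * (q + 1) / ((p + 1) * (q - 1)) := by
    apply div_pos <;> apply mul_pos <;> linarith
  exact mul_pos (div_pos (by linarith) (mul_pos (by linarith) (by linarith))) (rpow_pos_of_pos this _)

theorem omegaSig_eq_omegaPQ_mul {n : ℕ} {p q : ℝ} (hp : 1 < p) (hq : 1 < q)
    (hσ : 0 < sigma n p) (hτ : 0 < tau n q) :
    omegaSig n p q = omegaPQ p q *
      ((p + 1) * sigma n p / 2 *
        ((p + 1) * sigma n p / ((q + 1) * tau n q)) ^ ((p - 1) / (q - p))) := by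
  have hp1 : p + 1 ≠ 0 := by linarith
  have hq1 : q - 1 ≠ 0 := by linarith
  have hbase : sigma n p * (p - 1) / (tau n q * (q - 1)) =
      (p - 1) * (q + 1) / ((p + 1) * (q - 1)) * ((p + 1) * sigma n p / ((q + 1) * tau n q)) := by
    field_simp
  have hnonneg : 0 ≤ (p - 1) * (q + 1) / ((p + 1) * (q - 1)) := by
    apply div_nonneg <;> apply mul_nonneg <;> linarith
  unfold omegaSig omegaPQ
  rw [hbase, mul_rpow hnonneg (div_pos (mul_pos (by linarith) hσ) (mul_pos (by linarith) hτ)).le]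
  field_simp

theorem omegaPQ_lt_omegaSig_general (p q : ℝ) (n : ℕ) (hn2 : n ≠ 2)
    (hp : 1 < p) (hpq : p < q)
    (hq : 3 ≤ n → q < ((n : ℝ) + 2) / ((n : ℝ) - 2)) :
    omegaPQ p q < omegaSig n p q := by
  have hσ : 0 < sigma n p := sigma_pos (by linarith) fun h => hpq.trans (hq h)
  have hτ : 0 < tau n q := sigma_pos (by linarith) hq
  have hx := add_one_mul_sigma n (p := p) (by linarith)
  have hy := add_one_mul_sigma n (p := q) (by linarith)
  rw [← tau_eq_sigma] at hy
  have hx_ne_two : (p + 1) * sigma n p ≠ 2 := by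
    have : (n : ℝ) - 2 ≠ 0 := sub_ne_zero.mpr (by exact_mod_cast hn2)
    rw [hx]
    intro h
    exact this (by nlinarith)
  rw [omegaSig_eq_omegaPQ_mul hp (by linarith) hσ hτ]
  refine lt_mul_of_one_lt_right (omegaPQ_pos hp hpq)
    (one_lt_div_mul_div_rpow (mul_pos (by linarith) hσ) (mul_pos (by linarith) hτ) two_pos
      (div_nonneg (by linarith) (by linarith)) hx_ne_two ?_)
  have hqp : q - p ≠ 0 := by linarith
  rw [hx, hy]
  field_simp
  ring

/-- For `n ≥ 1`, `n ≠ 2`, and `1 < p < q < p*(n)` (the subcriticality condition is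
vacuous for `n = 1` where `p*(n) = ∞`), we have `ω_{p,q} < ω_{σ,τ,p,q}`. -/
theorem omegaPQ_lt_omegaSig (p q : ℝ) (n : ℕ) (hn : 1 ≤ n) (hn2 : n ≠ 2)
    (hp : 1 < p) (hpq : p < q)
    (hq : 3 ≤ n → q < ((n : ℝ) + 2) / ((n : ℝ) - 2)) :
    omegaPQ p q < omegaSig n p q :=
  omegaPQ_lt_omegaSig_general p q n hn2 hp hpq hq
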